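/- arXiv:1312.5225 — 4 statements merged into one kernel-verified Lean document; each statement's English description precedes it below -/
import Mathlib

section
/- Let F be a finite field, and let k, s, t be integers with 1 ≤ k ≤ s ≤ t. Let A, B ⊆ F be feature sets with |A| = t, |B| = s, and set ω = |A ∩ B|; assume 2ω ≥ t + k. Let f, g ∈ F[X] have degree < k and set V = f + χ_A and W = g + χ_B. Suppose P₀, Q₀ ∈ F[X] are coprime polynomials with Q₀ ≠ 0 and deg Q₀ ≤ t − ω, such that the polynomial R₀ = P₀·V + Q₀·W is nonzero and deg R₀ < deg Q₀ + k. Then there exists a nonzero constant c ∈ F such that P₀ = c·χ_{B∖A} and Q₀ = −c·χ_{A∖B}. (This is the algebraic core of Theorem 1(a): any low-degree combination witness identifies the characteristic polynomials of the set differences up to a common scalar.) -/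
open Polynomial Finset

/-- The characteristic polynomial of a finite subset `A` of a field:
`χ_A(X) = ∏_{a ∈ A} (X - a)`. -/
noncomputable def charPoly {F : Type*} [Field F] (A : Finset F) : F[X] :=
  ∏ a ∈ A, (X - C a)

lemma charPoly_monic {F : Type*} [Field F] (A : Finset F) : (charPoly A).Monic :=
  monic_prod_of_monic _ _ fun a _ => monic_X_sub_C a

lemma charPoly_ne_zero {F : Type*} [Field F] (A : Finset F) : charPoly A ≠ 0 :=
  (charPoly_monic A).ne_zero

lemma charPoly_natDegree {F : Type*} [Field F] (A : Finset F) :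
    (charPoly A).natDegree = A.card := by
  unfold charPoly
  rw [natDegree_prod _ _ fun a _ => X_sub_C_ne_zero a]
  simp

lemma charPoly_union {F : Type*} [Field F] [DecidableEq F] {A B : Finset F}
    (h : Disjoint A B) : charPoly (A ∪ B) = charPoly A * charPoly B :=
  Finset.prod_union h

lemma charPoly_coprime {F : Type*} [Field F] {A B : Finset F}
    (h : Disjoint A B) : IsCoprime (charPoly A) (charPoly B) := by
  apply IsCoprime.prod_left; intro a ha
  apply IsCoprime.prod_right; intro b hb
  have hab : a ≠ b := fun e => Finset.disjoint_left.mp h ha (e ▸ hb)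
  exact Polynomial.pairwise_coprime_X_sub_C Function.injective_id hab

/-- Algebraic core of Theorem 1(a): any coprime low-degree combination witness
identifies the characteristic polynomials of the set differences up to a common
nonzero scalar. -/
theorem stmt0 {F : Type*} [Field F] [Fintype F] [DecidableEq F]
    (k s t : ℕ) (hk : 1 ≤ k) (hks : k ≤ s) (hst : s ≤ t)
    (A B : Finset F) (hA : A.card = t) (hB : B.card = s)
    (hω : t + k ≤ 2 * (A ∩ B).card)
    (f g : F[X]) (hf : f.degree < (k : WithBot ℕ)) (hg : g.degree < (k : WithBot ℕ))
    (V W : F[X]) (hV : V = f + charPoly A) (hW : W = g + charPoly B)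
    (P₀ Q₀ : F[X]) (hcop : IsCoprime P₀ Q₀) (hQ₀ : Q₀ ≠ 0)
    (hdegQ : Q₀.natDegree ≤ t - (A ∩ B).card)
    (hR : P₀ * V + Q₀ * W ≠ 0)
    (hdegR : (P₀ * V + Q₀ * W).natDegree < Q₀.natDegree + k) :
    ∃ c : F, c ≠ 0 ∧ P₀ = C c * charPoly (B \ A) ∧ Q₀ = - C c * charPoly (A \ B) := by
  set ω := (A ∩ B).card with hωdef
  set P' := charPoly (B \ A) with hP'
  set Q' := charPoly (A \ B) with hQ'
  -- cardinalities
  have hωt : ω ≤ t := by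
    rw [← hA]; exact Finset.card_le_card Finset.inter_subset_left
  have hcardAB : (A \ B).card = t - ω := by
    rw [← Finset.sdiff_inter_self_left A B, Finset.card_sdiff_of_subset Finset.inter_subset_left, hA]
  have hcardBA : (B \ A).card = s - ω := by
    rw [← Finset.sdiff_inter_self_left B A, Finset.card_sdiff_of_subset Finset.inter_subset_left, hB,
      Finset.inter_comm]
  -- product identity χ_A · χ_{B\A} = χ_B · χ_{A\B}
  have hprod : charPoly A * P' = charPoly B * Q' := by
    rw [hP', hQ', ← charPoly_union Finset.disjoint_sdiff, ← charPoly_union Finset.disjoint_sdiff,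
      Finset.union_sdiff_self_eq_union, Finset.union_sdiff_self_eq_union, Finset.union_comm]
  -- natDegree bounds on f and g
  have hfnd : f.natDegree ≤ k - 1 := by
    rcases eq_or_ne f 0 with rfl | h
    · simp
    · have := (natDegree_lt_iff_degree_lt h).mpr hf
      omega
  have hgnd : g.natDegree ≤ k - 1 := by
    rcases eq_or_ne g 0 with rfl | h
    · simp
    · have := (natDegree_lt_iff_degree_lt h).mpr hg
      omega
  -- V is monic of degree t
  have hdegχA : (charPoly A).degree = (t : WithBot ℕ) := by
    rw [degree_eq_natDegree (charPoly_ne_zero A), charPoly_natDegree, hA]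
  have hfltχA : f.degree < (charPoly A).degree := by
    rw [hdegχA]
    exact lt_of_lt_of_le hf (by exact_mod_cast Nat.cast_le.mpr (le_trans hks hst))
  have hVm : V.Monic := by
    rw [hV, add_comm]
    exact (charPoly_monic A).add_of_left hfltχA
  have hVdeg : V.natDegree = t := by
    have : V.degree = (t : WithBot ℕ) := by
      rw [hV, degree_add_eq_right_of_degree_lt hfltχA, hdegχA]
    exact natDegree_eq_of_degree_eq_some this
  -- the key cross combination
  set R := P₀ * V + Q₀ * W with hRdef
  set E := P' * f - Q' * g with hE
  set D := P₀ * Q' + P' * Q₀ with hD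
  have hEeq : P' * V - Q' * W = E := by
    rw [hV, hW, hE]
    linear_combination hprod
  have hDV : D * V = Q' * R + Q₀ * E := by
    rw [← hEeq, hRdef, hD]; ring
  -- D must vanish, by degrees
  have hD0 : D = 0 := by
    by_contra hDne
    have hRHS : (Q' * R + Q₀ * E).natDegree ≤ 2 * (t - ω) + k - 1 := by
      refine le_trans (natDegree_add_le _ _) (max_le ?_ ?_)
      · refine le_trans (natDegree_mul_le) ?_
        have h1 : Q'.natDegree = t - ω := by rw [hQ', charPoly_natDegree, hcardAB]
        omega
      · refine le_trans (natDegree_mul_le) ?_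
        have h2 : E.natDegree ≤ (t - ω) + (k - 1) := by
          refine le_trans (natDegree_sub_le _ _) (max_le ?_ ?_)
          · refine le_trans (natDegree_mul_le) ?_
            have : P'.natDegree = s - ω := by rw [hP', charPoly_natDegree, hcardBA]
            omega
          · refine le_trans (natDegree_mul_le) ?_
            have : Q'.natDegree = t - ω := by rw [hQ', charPoly_natDegree, hcardAB]
            omega
        omega
    have hLHS : (D * V).natDegree = D.natDegree + t := by
      rw [natDegree_mul hDne hVm.ne_zero, hVdeg]
    rw [hDV] at hLHS
    omega
  -- from D = 0 and coprimality, conclude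
  have hQ'ne : Q' ≠ 0 := charPoly_ne_zero _
  have hdvd1 : Q₀ ∣ Q' := by
    refine hcop.symm.dvd_of_dvd_mul_left ⟨-P', ?_⟩
    have : P₀ * Q' = -(P' * Q₀) := by linear_combination hD0
    rw [this]; ring
  have hdvd2 : Q' ∣ Q₀ := by
    refine (charPoly_coprime (disjoint_sdiff_sdiff)).dvd_of_dvd_mul_left ⟨-P₀, ?_⟩
    have : P' * Q₀ = -(P₀ * Q') := by linear_combination hD0
    rw [this]; ring
  obtain ⟨u, hu⟩ := associated_of_dvd_dvd hdvd2 hdvd1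
  obtain ⟨d, hdu, hdC⟩ := Polynomial.isUnit_iff.mp u.isUnit
  have hd0 : d ≠ 0 := hdu.ne_zero
  refine ⟨-d, neg_ne_zero.mpr hd0, ?_, ?_⟩
  · have hQ₀eq : Q₀ = C d * Q' := by rw [← hu, ← hdC]; ring
    have : P₀ * Q' = (C (-d) * P') * Q' := by
      have h1 : P₀ * Q' = -(P' * Q₀) := by linear_combination hD0
      rw [h1, hQ₀eq, map_neg]; ring
    exact mul_right_cancel₀ hQ'ne this
  · rw [← hu, ← hdC, map_neg, neg_neg]; ring
end

section
/- Let F be a finite field, A, B ⊆ F finite subsets with |B| ≤ |A|, k ≥ 1 an integer, f, g ∈ F[X] of degree < k, and set V = f + χ_A, W = g + χ_B. Then χ_{B∖A}·V − χ_{A∖B}·W = χ_{B∖A}·f − χ_{A∖B}·g; in particular this polynomial has degree strictly less than deg χ_{A∖B} + k = |A∖B| + k. (This provides the existence of a combination witness of the kind found in the partial recovery attack.) -/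
/-! Both `χ_{B∖A} · χ_A` and `χ_{A∖B} · χ_B` equal `χ_{A∪B}`, so the characteristic parts of the
two vault records cancel in the combination, leaving `χ_{B∖A} f − χ_{A∖B} g`. Its degree is below
`|A∖B| + k` because `|B| ≤ |A|` forces `|B∖A| ≤ |A∖B|`. -/

open Polynomial Finset

section

variable {F : Type*} [Field F]

lemma charPoly_sdiff_mul_charPoly [DecidableEq F] (A B : Finset F) :
    charPoly (B \ A) * charPoly A = charPoly (A ∪ B) := by
  rw [charPoly, charPoly, charPoly, ← prod_union sdiff_disjoint, union_comm,
    union_sdiff_self_eq_union]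

lemma degree_charPoly (A : Finset F) : (charPoly A).degree = #A := by
  simp only [charPoly, degree_prod, degree_X_sub_C, sum_const, nsmul_eq_mul, mul_one]

lemma degree_charPoly_mul_lt {S : Finset F} {f : F[X]} {n k : ℕ} (hS : #S ≤ n)
    (hf : f.degree < k) : (charPoly S * f).degree < ((n + k : ℕ) : WithBot ℕ) := by
  rw [degree_mul, degree_charPoly, Nat.cast_add]
  exact WithBot.add_lt_add_of_le_of_lt WithBot.coe_ne_bot (WithBot.coe_le_coe.mpr hS) hf

end

theorem stmt1_general {F : Type*} [Field F] [DecidableEq F]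
    (k : ℕ)
    (A B : Finset F) (hBA : B.card ≤ A.card)
    (f g : F[X]) (hf : f.degree < (k : WithBot ℕ)) (hg : g.degree < (k : WithBot ℕ))
    (V W : F[X]) (hV : V = f + charPoly A) (hW : W = g + charPoly B) :
    charPoly (B \ A) * V - charPoly (A \ B) * W
        = charPoly (B \ A) * f - charPoly (A \ B) * g ∧
    (charPoly (B \ A) * f - charPoly (A \ B) * g).degree
        < (((A \ B).card + k : ℕ) : WithBot ℕ) := by
  refine ⟨?_, ?_⟩
  · rw [hV, hW, mul_add, mul_add, charPoly_sdiff_mul_charPoly A B,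
      charPoly_sdiff_mul_charPoly B A, union_comm]
    ring
  · have hcard : #(B \ A) ≤ #(A \ B) := card_sdiff_le_card_sdiff_iff.mpr hBA
    exact (degree_sub_le _ _).trans_lt
      (max_lt (degree_charPoly_mul_lt hcard hf) (degree_charPoly_mul_lt le_rfl hg))

/-- Existence of a combination witness: for vault records `V = f + χ_A` and
`W = g + χ_B` with `|B| ≤ |A|`, one has
`χ_{B∖A}·V − χ_{A∖B}·W = χ_{B∖A}·f − χ_{A∖B}·g`, a polynomial of degree
strictly less than `|A∖B| + k`. -/
theorem stmt1 {F : Type*} [Field F] [Fintype F] [DecidableEq F]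
    (k : ℕ) (hk : 1 ≤ k)
    (A B : Finset F) (hBA : B.card ≤ A.card)
    (f g : F[X]) (hf : f.degree < (k : WithBot ℕ)) (hg : g.degree < (k : WithBot ℕ))
    (V W : F[X]) (hV : V = f + charPoly A) (hW : W = g + charPoly B) :
    charPoly (B \ A) * V - charPoly (A \ B) * W
        = charPoly (B \ A) * f - charPoly (A \ B) * g ∧
    (charPoly (B \ A) * f - charPoly (A \ B) * g).degree
        < (((A \ B).card + k : ℕ) : WithBot ℕ) :=
  stmt1_general k A B hBA f g hf hg V W hV hW
end

section
/- Let F be a finite field and let k, s, t be integers with 1 ≤ k ≤ s ≤ t. Let V, W ∈ F[X] be polynomials of degree t and s respectively. Suppose there exist coprime polynomials P*, Q* ∈ F[X] with Q* ≠ 0 such that R = P*·V + Q*·W is nonzero with deg R < deg Q* + k, and suppose that f̂ = V rem Q* (the remainder of V upon division by Q*) has degree < k. Then there exist polynomials ĝ, χ ∈ F[X] and a nonzero constant c ∈ F such that: (1) deg ĝ < k; (2) V = f̂ + χ·Q̂ and W = ĝ + χ·P̂, where P̂ = c·P* and Q̂ = −c·Q*; and (3) deg χ = t − deg Q*. -/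
open Polynomial

/-- Lemma 4 of the paper: from a coprime low-degree combination witness for two
polynomials `V`, `W` of degrees `t ≥ s`, the two polynomials decompose as
`V = f̂ + χ·Q̂` and `W = ĝ + χ·P̂` with `P̂ = c·P*`, `Q̂ = −c·Q*` for a nonzero
constant `c`, where `f̂ = V rem Q*`, `deg ĝ < k` and `deg χ = t − deg Q*`. -/
theorem stmt2 {F : Type*} [Field F] [Fintype F]
    (k s t : ℕ) (hk : 1 ≤ k) (hks : k ≤ s) (hst : s ≤ t)
    (V W : F[X]) (hV : V.degree = (t : WithBot ℕ)) (hW : W.degree = (s : WithBot ℕ))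
    (Pstar Qstar : F[X]) (hcop : IsCoprime Pstar Qstar) (hQ : Qstar ≠ 0)
    (hR : Pstar * V + Qstar * W ≠ 0)
    (hdegR : (Pstar * V + Qstar * W).natDegree < Qstar.natDegree + k)
    (hfhat : (V % Qstar).degree < (k : WithBot ℕ)) :
    ∃ (ghat χ : F[X]) (c : F), c ≠ 0 ∧
      ghat.degree < (k : WithBot ℕ) ∧
      V = V % Qstar + χ * (- C c * Qstar) ∧
      W = ghat + χ * (C c * Pstar) ∧
      χ.natDegree = t - Qstar.natDegree := by
  classical
  set f := V % Qstar with hf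
  set q := V / Qstar with hq
  set R := Pstar * V + Qstar * W with hRdef
  have hV0 : V ≠ 0 := fun h => by simp [h] at hV
  have hW0 : W ≠ 0 := fun h => by simp [h] at hW
  have hkt : (k : WithBot ℕ) ≤ (t : WithBot ℕ) := by
    exact_mod_cast (le_trans hks hst)
  -- Qstar.degree ≤ V.degree
  have hQleV : Qstar.degree ≤ V.degree := by
    by_contra h
    push_neg at h
    have : f = V := (Polynomial.mod_eq_self_iff hQ).2 h
    rw [this, hV] at hfhat
    exact absurd hfhat (not_lt.2 hkt)
  have hq0 : q ≠ 0 := fun h =>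
    absurd ((Polynomial.div_eq_zero_iff hQ).1 h) (not_lt.2 hQleV)
  have hdm : Qstar * q + f = V := EuclideanDomain.div_add_mod V Qstar
  -- natDegree of q
  have hdq : Qstar.degree + q.degree = V.degree := Polynomial.degree_add_div hQ hQleV
  have hqnat : q.natDegree = t - Qstar.natDegree := by
    rw [Polynomial.degree_eq_natDegree hQ, Polynomial.degree_eq_natDegree hq0, hV] at hdq
    have : Qstar.natDegree + q.natDegree = t := by exact_mod_cast hdq
    omega
  -- Pstar ≠ 0
  have hP0 : Pstar ≠ 0 := by
    intro h
    have hRW : R = Qstar * W := by rw [hRdef, h]; ring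
    rw [hRW, Polynomial.natDegree_mul hQ hW0] at hdegR
    have : W.natDegree = s := Polynomial.natDegree_eq_of_degree_eq_some hW
    omega
  have hVnat : V.natDegree = t := Polynomial.natDegree_eq_of_degree_eq_some hV
  have hWnat : W.natDegree = s := Polynomial.natDegree_eq_of_degree_eq_some hW
  -- deg Pstar ≤ deg Qstar
  have hPQ : Pstar.natDegree ≤ Qstar.natDegree := by
    by_contra h
    push_neg at h
    have hlt : (Qstar * W).degree < (Pstar * V).degree := by
      rw [Polynomial.degree_mul, Polynomial.degree_mul,
        Polynomial.degree_eq_natDegree hQ, Polynomial.degree_eq_natDegree hP0, hV, hW]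
      have h1 : Qstar.natDegree + s < Pstar.natDegree + t := by omega
      exact_mod_cast h1
    have hdR : R.degree = (Pstar * V).degree := by
      rw [hRdef, Polynomial.degree_add_eq_left_of_degree_lt hlt]
    have : R.natDegree = Pstar.natDegree + t := by
      rw [Polynomial.natDegree_eq_of_degree_eq_some
        (by rw [hdR, Polynomial.degree_mul, Polynomial.degree_eq_natDegree hP0, hV]; norm_cast)]
    omega
  -- the key polynomial
  set g := W + q * Pstar with hg
  have hQg : Qstar * g = R - Pstar * f := by
    rw [hg, hRdef]
    linear_combination Pstar * hdm
  have hdegQg : (Qstar * g).degree < ((Qstar.natDegree + k : ℕ) : WithBot ℕ) := by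
    rw [hQg]
    have h1 : R.degree < ((Qstar.natDegree + k : ℕ) : WithBot ℕ) :=
      (Polynomial.natDegree_lt_iff_degree_lt hR).1 hdegR
    have h2 : (Pstar * f).degree < ((Qstar.natDegree + k : ℕ) : WithBot ℕ) := by
      by_cases hf0 : f = 0
      · rw [hf0, mul_zero, Polynomial.degree_zero]
        exact WithBot.bot_lt_coe _
      · have hfk : f.natDegree < k := (Polynomial.natDegree_lt_iff_degree_lt hf0).2 hfhat
        have : (Pstar * f).natDegree < Qstar.natDegree + k := by
          rw [Polynomial.natDegree_mul hP0 hf0]; omega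
        exact (Polynomial.natDegree_lt_iff_degree_lt (mul_ne_zero hP0 hf0)).1 this
    calc (R - Pstar * f).degree ≤ max R.degree (Pstar * f).degree :=
          Polynomial.degree_sub_le _ _
      _ < _ := max_lt h1 h2
  have hgdeg : g.degree < (k : WithBot ℕ) := by
    by_cases hg0 : g = 0
    · rw [hg0, Polynomial.degree_zero]; exact WithBot.bot_lt_coe _
    · have : (Qstar * g).natDegree < Qstar.natDegree + k :=
        (Polynomial.natDegree_lt_iff_degree_lt (mul_ne_zero hQ hg0)).2 hdegQg
      rw [Polynomial.natDegree_mul hQ hg0] at this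
      exact (Polynomial.natDegree_lt_iff_degree_lt hg0).1 (by omega)
  refine ⟨g, q, -1, by norm_num, hgdeg, ?_, ?_, hqnat⟩
  · have : -Polynomial.C (-1 : F) * Qstar = Qstar := by simp
    rw [this]
    linear_combination -hdm
  · simp only [map_neg, map_one, hg]
    ring
end

section
/- Let F be a finite field with q elements and let k, t be integers with 1 ≤ k ≤ t. For every function g : F^{t−k} → (subsets of F), the number of feature sets A ⊆ F with |A| = t such that g(rec_k(A)) = A is at most q^{t−k}. Consequently, for a uniformly random feature set A of size t, the probability that g recovers A from its deterministic vault record is at most q^{t−k} / C(q, t). -/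
open Polynomial Finset

/-- The deterministic vault record of a feature set `A` of size `n` with
parameter `k`: the tuple of coefficients of `X^k, …, X^{n−1}` of `χ_A`. -/
noncomputable def vRec {F : Type*} [Field F] (n k : ℕ) (A : Finset F) :
    Fin (n - k) → F :=
  fun j => (charPoly A).coeff (k + (j : ℕ))

/-- Security of single vault records: for any recovery function `g`, the number
of feature sets `A` of size `t` recovered by `g` from their deterministic vault
record is at most `q^{t−k}`; consequently, the success probability over a
uniformly random such feature set is at most `q^{t−k} / C(q,t)`. -/
theorem stmt14 {F : Type*} [Field F] [Fintype F] [DecidableEq F]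
    (k t : ℕ) (hk : 1 ≤ k) (hkt : k ≤ t)
    (g : (Fin (t - k) → F) → Finset F) :
    Set.ncard { A : Finset F | A.card = t ∧ g (vRec t k A) = A }
        ≤ (Fintype.card F) ^ (t - k) ∧
    (Set.ncard { A : Finset F | A.card = t ∧ g (vRec t k A) = A } : ℚ)
        / ((Fintype.card F).choose t : ℚ)
      ≤ ((Fintype.card F) ^ (t - k) : ℚ) / ((Fintype.card F).choose t : ℚ) := by
  have hmain : Set.ncard { A : Finset F | A.card = t ∧ g (vRec t k A) = A }
      ≤ (Fintype.card F) ^ (t - k) := by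
    have h := Set.ncard_le_ncard_of_injOn (s := { A : Finset F | A.card = t ∧ g (vRec t k A) = A }) (vRec t k)
      (fun A _ => Set.mem_univ _)
      (fun A hA B hB hAB => by rw [← hA.2, ← hB.2, hAB])
      (Set.finite_univ (α := Fin (t - k) → F))
    calc Set.ncard { A : Finset F | A.card = t ∧ g (vRec t k A) = A }
        ≤ Set.ncard (Set.univ : Set (Fin (t - k) → F)) := h
      _ = Fintype.card (Fin (t - k) → F) := by
          rw [Set.ncard_univ, Nat.card_eq_fintype_card]
      _ = (Fintype.card F) ^ (t - k) := by simp [Fintype.card_fun]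
  refine ⟨hmain, ?_⟩
  gcongr
  exact_mod_cast hmain
end
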